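/- Let f : ℝ → ℝ be the function f(λ) = k²(λ−1)²σ² + λ²σ²/(λ²σ²+1) with σ = 5 and k = 0.2. Then the infimum of f over ℝ (the optimal affine cost in the Witsenhausen counterexample) is strictly greater than 0.167, whereas the paper's reported 4-step nonlinear strategy achieves cost less than 0.167; in particular min_λ f(λ) > 0.16692462. -/
import Mathlib

/-- The best affine cost `f(λ) = k²(λ−1)²σ² + λ²σ²/(λ²σ²+1)` with `σ = 5`, `k = 0.2`
(i.e. `k² = 0.04`, `σ² = 25`) exceeds `0.167`, and in particular exceeds the
nonlinear benchmark value `0.16692462`. -/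
theorem affine_strictly_suboptimal
    (f : ℝ → ℝ)
    (hf : f = fun lam => (0.2 : ℝ) ^ 2 * (lam - 1) ^ 2 * (5 : ℝ) ^ 2
      + lam ^ 2 * (5 : ℝ) ^ 2 / (lam ^ 2 * (5 : ℝ) ^ 2 + 1)) :
    (∀ lam : ℝ, (0.167 : ℝ) < f lam) ∧ (∀ lam : ℝ, (0.16692462 : ℝ) < f lam) := by
  subst hf
  have key : ∀ lam : ℝ, (0.167 : ℝ) < (0.2 : ℝ) ^ 2 * (lam - 1) ^ 2 * (5 : ℝ) ^ 2
      + lam ^ 2 * (5 : ℝ) ^ 2 / (lam ^ 2 * (5 : ℝ) ^ 2 + 1) := by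
    intro lam
    have hD : (0 : ℝ) < lam ^ 2 * (5 : ℝ) ^ 2 + 1 := by positivity
    rw [← sub_lt_iff_lt_add', lt_div_iff₀ hD]
    nlinarith [sq_nonneg lam, sq_nonneg (lam - 1), sq_nonneg (lam^2 - lam),
      sq_nonneg (5*lam^2 - 5*lam + 1), sq_nonneg (lam*(lam-1))]
  exact ⟨key, fun lam => lt_trans (by norm_num) (key lam)⟩
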